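/- arXiv:dg-ga/9712013 — 2 statements merged into one kernel-verified Lean document; each statement's English description precedes it below -/
import Mathlib

section
/- Let ∇ be a Koszul connection on TM whose conjugate connection ∇' (defined by ∇'_X Y = ∇_Y X + [X,Y]) is flat. Then for all vector fields X, Y, Z: ∇_Z[X,Y] = [X, ∇_Z Y] + [∇_Z X, Y] + ∇_{∇'_Y Z} X - ∇_{∇'_X Z} Y. -/
/-- The conjugate of a Koszul connection, `∇'_X Y = ∇_Y X + [X, Y]`. -/
def conjConn {L : Type*} [LieRing L] (D : L → L → L) : L → L → L :=
  fun X Y => D Y X + ⁅X, Y⁆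

/-- The curvature `R'(X,Y)Z = ∇'_{[X,Y]} Z - ∇'_X ∇'_Y Z + ∇'_Y ∇'_X Z`. -/
def curv {L : Type*} [LieRing L] (D' : L → L → L) : L → L → L → L :=
  fun X Y Z => D' ⁅X, Y⁆ Z - D' X (D' Y Z) + D' Y (D' X Z)

/-- if the conjugate connection `∇'_X Y = ∇_Y X + [X,Y]` of a Koszul
connection `∇` is flat, then
`∇_Z[X,Y] = [X, ∇_Z Y] + [∇_Z X, Y] + ∇_{∇'_Y Z} X - ∇_{∇'_X Z} Y`.
Setting as in Statement 0 (Lie–Rinehart formulation of vector fields). -/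
theorem flat_conjugate_connection_bracket_formula
    (R A L : Type*) [CommRing R] [CommRing A] [Algebra R A]
    [LieRing L] [LieAlgebra R L] [Module A L]
    (ρ : L → Derivation R A A)
    (hρ : ∀ (X Y : L) (f : A), ⁅X, f • Y⁆ = f • ⁅X, Y⁆ + (ρ X f) • Y)
    (D : L → L → L)
    (hadd₁ : ∀ X X' Y, D (X + X') Y = D X Y + D X' Y)
    (hadd₂ : ∀ X Y Y', D X (Y + Y') = D X Y + D X Y')
    (hsmulR₁ : ∀ (r : R) (X Y : L), D (r • X) Y = r • D X Y)
    (hsmulR₂ : ∀ (r : R) (X Y : L), D X (r • Y) = r • D X Y)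
    (hfun : ∀ (f : A) (X Y : L), D (f • X) Y = f • D X Y)
    (hleib : ∀ (f : A) (X Y : L), D X (f • Y) = f • D X Y + (ρ X f) • Y)
    (hflat : ∀ X Y Z : L, curv (conjConn D) X Y Z = 0) :
    ∀ X Y Z : L,
      D Z ⁅X, Y⁆ =
        ⁅X, D Z Y⁆ + ⁅D Z X, Y⁆ + D (conjConn D Y Z) X - D (conjConn D X Z) Y := by
  intro X Y Z
  have h := hflat X Y Z
  simp only [curv, conjConn, hadd₁, lie_add] at h ⊢
  have hj : ⁅⁅X, Y⁆, Z⁆ = ⁅X, ⁅Y, Z⁆⁆ - ⁅Y, ⁅X, Z⁆⁆ := by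
    rw [lie_lie]
  rw [hj] at h
  have hs : ⁅D Z X, Y⁆ = -⁅Y, D Z X⁆ := (lie_skew _ _).symm
  rw [hs]
  rw [← sub_eq_zero, ← h]
  abel
end

section
/- Let a and b be Lie algebras over a commutative ring, with bilinear maps ∇ : b × a → a and Δ : a × b → b. Define a bracket on the module direct sum a ⊕ b by [X ⊕ Y, X' ⊕ Y'] = ([X,X'] + ∇_Y X' - ∇_{Y'} X) ⊕ ([Y,Y'] + Δ_X Y' - Δ_{X'} Y). If ∇ is a Lie algebra action of b on a by derivations in the sense ∇_{[Y,Y']} = [∇_Y, ∇_{Y'}], Δ is a Lie algebra action of a on b with Δ_{[X,X']} = [Δ_X, Δ_{X'}], and the compatibility conditions ∇_Y[X,X'] = [∇_Y X, X'] + [X, ∇_Y X'] + ∇_{Δ_{X'} Y} X - ∇_{Δ_X Y} X' and Δ_X[Y,Y'] = [Δ_X Y, Y'] + [Y, Δ_X Y'] + Δ_{∇_{Y'} X} Y - Δ_{∇_Y X} Y' hold, then this bracket makes a ⊕ b a Lie algebra containing a and b as subalgebras. -/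
/-- the matched pair construction. Given Lie algebras `a`, `b` over a
commutative ring `R`, bilinear maps `∇ : b → End_R(a)` (written `N`) and
`Δ : a → End_R(b)` (written `Dl`) which are Lie algebra actions and satisfy the two
matched-pair compatibility conditions, the bracket
`[X ⊕ Y, X' ⊕ Y'] = ([X,X'] + ∇_Y X' - ∇_{Y'} X) ⊕ ([Y,Y'] + Δ_X Y' - Δ_{X'} Y)`
makes `a ⊕ b` into a Lie algebra (alternating, bilinear, Jacobi/Leibniz identity)
containing `a` and `b` as subalgebras. -/
theorem matched_pair_lie_algebra
    (R A B : Type*) [CommRing R] [LieRing A] [LieAlgebra R A]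
    [LieRing B] [LieAlgebra R B]
    (N : B →ₗ[R] A →ₗ[R] A) (Dl : A →ₗ[R] B →ₗ[R] B)
    (hN : ∀ (Y Y' : B) (X : A), N ⁅Y, Y'⁆ X = N Y (N Y' X) - N Y' (N Y X))
    (hD : ∀ (X X' : A) (Y : B), Dl ⁅X, X'⁆ Y = Dl X (Dl X' Y) - Dl X' (Dl X Y))
    (hc1 : ∀ (Y : B) (X X' : A),
      N Y ⁅X, X'⁆ = ⁅N Y X, X'⁆ + ⁅X, N Y X'⁆ + N (Dl X' Y) X - N (Dl X Y) X')
    (hc2 : ∀ (X : A) (Y Y' : B),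
      Dl X ⁅Y, Y'⁆ = ⁅Dl X Y, Y'⁆ + ⁅Y, Dl X Y'⁆ + Dl (N Y' X) Y - Dl (N Y X) Y') :
    let br : A × B → A × B → A × B := fun z w =>
      (⁅z.1, w.1⁆ + N z.2 w.1 - N w.2 z.1, ⁅z.2, w.2⁆ + Dl z.1 w.2 - Dl w.1 z.2)
    (∀ z, br z z = 0) ∧
    (∀ z z' w, br (z + z') w = br z w + br z' w) ∧
    (∀ z w w', br z (w + w') = br z w + br z w') ∧
    (∀ (r : R) z w, br (r • z) w = r • br z w) ∧
    (∀ (r : R) z w, br z (r • w) = r • br z w) ∧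
    (∀ x y z, br x (br y z) = br (br x y) z + br y (br x z)) ∧
    (∀ X X' : A, br (X, 0) (X', 0) = (⁅X, X'⁆, 0)) ∧
    (∀ Y Y' : B, br (0, Y) (0, Y') = (0, ⁅Y, Y'⁆)) := by
  intro br
  have hbr : ∀ z w : A × B, br z w =
      (⁅z.1, w.1⁆ + N z.2 w.1 - N w.2 z.1, ⁅z.2, w.2⁆ + Dl z.1 w.2 - Dl w.1 z.2) :=
    fun _ _ => rfl
  refine ⟨?_, ?_, ?_, ?_, ?_, ?_, ?_, ?_⟩
  · intro z
    simp [hbr, Prod.ext_iff]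
  · intro z z' w
    simp [hbr, Prod.ext_iff, add_lie, lie_add, map_add]
    constructor <;> abel
  · intro z w w'
    simp [hbr, Prod.ext_iff, add_lie, lie_add, map_add]
    constructor <;> abel
  · intro r z w
    simp [hbr, Prod.ext_iff, smul_lie, lie_smul, map_smul, smul_add, smul_sub]
  · intro r z w
    simp [hbr, Prod.ext_iff, smul_lie, lie_smul, map_smul, smul_add, smul_sub]
  · intro x y z
    simp only [hbr, Prod.ext_iff, Prod.fst_add, Prod.snd_add, lie_add, add_lie,
      lie_sub, sub_lie, map_add, map_sub, LinearMap.add_apply, LinearMap.sub_apply,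
      hN, hD, hc1, hc2]
    constructor
    · simp only [lie_lie, ← lie_skew _ y.1, neg_lie, lie_neg, neg_neg]
      abel
    · simp only [lie_lie, ← lie_skew _ y.2, neg_lie, lie_neg, neg_neg]
      abel
  · intro X X'
    simp [hbr, Prod.ext_iff]
  · intro Y Y'
    simp [hbr, Prod.ext_iff]
end
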